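/- arXiv:1604.07039 — 3 statements merged into one kernel-verified Lean document; each statement's English description precedes it below -/
import Mathlib

section
/- (Lemma 2, part o1) Suppose X^n ⊂ ℝ^d (d ≥ 2) is in general position and M(X^n) has affine dimension d. Let z_1 be a point in the interior of M(X^n) with B̃_{z_1} ≠ ∅. Then for every u ∈ U_{z_1} and every z ∈ B̃_{z_1} one has u·z ≥ u·z_1. -/
open scoped RealInnerProductSpace
open MeasureTheory

noncomputable section

/-- `E d` is the Euclidean space `ℝ^d`. -/
abbrev E (d : ℕ) : Type := EuclideanSpace ℝ (Fin d)

/-- A sample `X` of `n` points in `ℝ^d` is in general position if no affine hyperplane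
(encoded as `{x | ⟪v, x⟫ = c}` for some `v ≠ 0`) contains more than `d` of the points. -/
def inGeneralPosition {d n : ℕ} (X : Fin n → E d) : Prop :=
  ∀ v : E d, v ≠ 0 → ∀ c : ℝ, ({i : Fin n | ⟪v, X i⟫ = c} : Set (Fin n)).ncard ≤ d

/-- Number of sample points in the closed halfspace `{z | ⟪u, z⟫ ≤ ⟪u, x⟫}`. -/
def sideCount {d n : ℕ} (X : Fin n → E d) (u x : E d) : ℕ :=
  ({i : Fin n | ⟪u, X i⟫ ≤ ⟪u, x⟫} : Set (Fin n)).ncard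

/-- Tukey's halfspace depth of `x` with respect to the sample `X`. -/
def depth {d n : ℕ} (X : Fin n → E d) (x : E d) : ℝ :=
  sInf {r : ℝ | ∃ u : E d, ‖u‖ = 1 ∧ r = (sideCount X u x : ℝ) / (n : ℝ)}

/-- The maximum Tukey depth `λ*` of the sample `X`. -/
def maxDepth {d n : ℕ} (X : Fin n → E d) : ℝ :=
  sSup (Set.range (depth X))

/-- The set `M(X)` of deepest points. -/
def MSet {d n : ℕ} (X : Fin n → E d) : Set (E d) :=
  {x | depth X x = maxDepth X}

/-- `U_x`: the set of optimal (unit) directions realizing the depth at `x`. -/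
def USet {d n : ℕ} (X : Fin n → E d) (x : E d) : Set (E d) :=
  {u | ‖u‖ = 1 ∧ (sideCount X u x : ℝ) / (n : ℝ) = depth X x}

/-- `H_{x,y}`: the open hemisphere of unit directions `u` with `⟪u, x⟫ < ⟪u, y⟫`. -/
def HSet {d : ℕ} (x y : E d) : Set (E d) :=
  {u | ‖u‖ = 1 ∧ ⟪u, x⟫ < ⟪u, y⟫}

/-- `B_z`. -/
def BSet {d n : ℕ} (X : Fin n → E d) (z : E d) : Set (E d) :=
  {x | x ∈ MSet X ∧ USet X x ∩ HSet x z = ∅}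

/-- `B̃_z = B_z \ {z}`. -/
def BTilde {d n : ℕ} (X : Fin n → E d) (z : E d) : Set (E d) :=
  BSet X z \ {z}

/-- `v` is a unit vector normal to an affine hyperplane spanned by `d` of the sample points. -/
def normalToSampleHyperplane {d n : ℕ} (X : Fin n → E d) (v : E d) : Prop :=
  ‖v‖ = 1 ∧ ∃ (s : Finset (Fin n)) (c : ℝ), s.card = d ∧
    (affineSpan ℝ (X '' (s : Set (Fin n))) : Set (E d)) = {x : E d | ⟪v, x⟫ = c}

/-- Condition (2.1) on a unit direction `u`. -/
def cond21 {d n : ℕ} (X : Fin n → E d) (u : E d) : Prop :=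
  ∀ v : E d, normalToSampleHyperplane X v → ⟪u, v⟫ ≠ 0

/-- `A` represents the columns of a `d × (d-1)` matrix which together with the unit
vector `u` form an orthonormal basis of `ℝ^d`. -/
def IsAu {d : ℕ} (u : E d) (A : Fin (d - 1) → E d) : Prop :=
  ‖u‖ = 1 ∧ Orthonormal ℝ A ∧ ∀ j, ⟪A j, u⟫ = 0

/-- The `A_u`-projection `A_u^T x ∈ ℝ^{d-1}` of a point `x ∈ ℝ^d`. -/
def proj {d : ℕ} (A : Fin (d - 1) → E d) (x : E d) : E (d - 1) :=
  (WithLp.equiv 2 (Fin (d - 1) → ℝ)).symm (fun j => ⟪A j, x⟫)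

/-- The embedding `A_u x = ∑ j x_j A_j ∈ ℝ^d` of a point `x ∈ ℝ^{d-1}`. -/
def embed {d : ℕ} (A : Fin (d - 1) → E d) (x : E (d - 1)) : E d :=
  ∑ j, x j • A j

/-- `λ₀ = inf_{u ∈ S^{d-1}} λ*(X_u^n)`, the infimum over all directions of the maximum
Tukey depth of the projected sample. -/
def lambda0 {d n : ℕ} (X : Fin n → E d) : ℝ :=
  sInf {r : ℝ | ∃ (u : E d) (A : Fin (d - 1) → E d),
    IsAu u A ∧ r = maxDepth (fun i => proj A (X i))}

/-- The average (barycenter) of a set `K ⊆ ℝ^d`, taken with respect to the Hausdorff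
measure of dimension equal to the affine dimension of `K`. -/
def setAverage {d : ℕ} (K : Set (E d)) : E d :=
  (μH[(Module.finrank ℝ (affineSpan ℝ K).direction : ℝ)] K).toReal⁻¹ •
    ∫ x in K, x ∂(μH[(Module.finrank ℝ (affineSpan ℝ K).direction : ℝ)])

/-- Tukey's halfspace median: the average of all deepest points. -/
def TukeyMedian {d n : ℕ} (X : Fin n → E d) : E d :=
  setAverage (MSet X)

/-- `m` contaminating points suffice to break down the Tukey median at `X`. -/
def breaksDown {d n : ℕ} (X : Fin n → E d) (m : ℕ) : Prop :=
  ∀ C : ℝ, ∃ Y : Fin m → E d, C < ‖TukeyMedian (Fin.append X Y) - TukeyMedian X‖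

/-- The finite sample (additional) breakdown point of the Tukey median at `X`. -/
def FSBP {d n : ℕ} (X : Fin n → E d) : ℝ :=
  sInf {r : ℝ | ∃ m : ℕ, 1 ≤ m ∧ breaksDown X m ∧ r = (m : ℝ) / ((n : ℝ) + (m : ℝ))}

/-! If `⟪u, z⟫ < ⟪u, z₁⟫`, the halfspace cut off at `z` in direction `u` holds no more sample
points than the one at `z₁`. As `z` and `z₁` are both deepest points, `u` is then optimal at `z`,
and it lies in `H_{z, z₁}`, contradicting `z ∈ B_{z₁}`. -/

section Depth

variable {d n : ℕ} (X : Fin n → E d)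

lemma sideCount_mono {u x y : E d} (h : ⟪u, x⟫ ≤ ⟪u, y⟫) : sideCount X u x ≤ sideCount X u y :=
  Set.ncard_le_ncard (fun _ hi => le_trans hi h) (Set.toFinite _)

lemma depth_le_sideCount_div {u : E d} (hu : ‖u‖ = 1) (x : E d) :
    depth X x ≤ (sideCount X u x : ℝ) / n :=
  csInf_le ⟨0, fun _ ⟨_, _, hr⟩ => hr ▸ by positivity⟩ ⟨u, hu, rfl⟩

lemma mem_USet_of_inner_le {u x y : E d} (hu : u ∈ USet X y) (hdepth : depth X y ≤ depth X x)
    (hxy : ⟪u, x⟫ ≤ ⟪u, y⟫) : u ∈ USet X x := by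
  refine ⟨hu.1, le_antisymm ?_ (depth_le_sideCount_div X hu.1 x)⟩
  calc (sideCount X u x : ℝ) / n ≤ (sideCount X u y : ℝ) / n := by
        gcongr
        exact sideCount_mono X hxy
    _ = depth X y := hu.2
    _ ≤ depth X x := hdepth

lemma inner_le_of_mem_BSet {u x y : E d} (hy : y ∈ MSet X) (hu : u ∈ USet X y)
    (hx : x ∈ BSet X y) : ⟪u, y⟫ ≤ ⟪u, x⟫ := by
  by_contra! hlt
  have hux : u ∈ USet X x :=
    mem_USet_of_inner_le X hu (hx.1.trans hy.symm).ge hlt.le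
  exact (Set.eq_empty_iff_forall_notMem.mp hx.2) u ⟨hux, hu.1, hlt⟩

end Depth

theorem lemma2_o1_general {d n : ℕ} (X : Fin n → E d)
    (z₁ : E d) (hz₁ : z₁ ∈ interior (MSet X)) :
    ∀ u ∈ USet X z₁, ∀ z ∈ BTilde X z₁, ⟪u, z₁⟫ ≤ ⟪u, z⟫ :=
  fun _ hu _ hz => inner_le_of_mem_BSet X (interior_subset hz₁) hu hz.1

/-- **Lemma 2, o1.** For every `u ∈ U_{z₁}` and every `z ∈ B̃_{z₁}` one has
`⟪u, z⟫ ≥ ⟪u, z₁⟫`. -/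
theorem lemma2_o1 {d n : ℕ} (hd : 2 ≤ d) (X : Fin n → E d)
    (hX : inGeneralPosition X) (hdim : affineSpan ℝ (MSet X) = ⊤)
    (z₁ : E d) (hz₁ : z₁ ∈ interior (MSet X)) (hB : (BTilde X z₁).Nonempty) :
    ∀ u ∈ USet X z₁, ∀ z ∈ BTilde X z₁, ⟪u, z₁⟫ ≤ ⟪u, z⟫ :=
  lemma2_o1_general X z₁ hz₁
end
end

section
/- (Lemma 3) Suppose X^n ⊂ ℝ^d (d ≥ 1) is in general position. Then there exists a point x_0 ∈ M(X^n) such that for every x ∈ ℝ^d with x ≠ x_0 there exists a unit vector u ∈ U_x with u·x < u·x_0; that is, U_x ∩ H_{x,x_0} ≠ ∅ for all x ≠ x_0. -/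
open scoped RealInnerProductSpace
open MeasureTheory

noncomputable section

/-! Read `x ∈ B_z` as `x ≼ z`. If `z` is deepest and `u` is an optimal direction at `x` with
`⟪u, z⟫ ≤ ⟪u, x⟫`, then the halfspace of `u` through `z` holds no more points than the one
through `x`, so `x` is deepest too and `u` is optimal at `z`; this makes `≼` transitive on
`M(X)`. It is antisymmetric because optimal directions form an open subset of the sphere: an
optimal `u` with `⟪u, x⟫ = ⟪u, z⟫` can be tilted towards `z - x`. Depth is upper semicontinuous,
so `M(X)` is compact and each `B_z` is closed. Zorn's lemma, with lower bounds of chains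
supplied by the finite intersection property, then gives a minimal `x₀`, i.e. `B_{x₀} = {x₀}`. -/

open Filter Topology

theorem exists_minimal_of_isCompact_lowerSet {α : Type*} [TopologicalSpace α] [T2Space α]
    {s : Set α} (hs : s.Nonempty) (L : α → Set α) (hLs : ∀ z ∈ s, L z ⊆ s)
    (hrefl : ∀ z ∈ s, z ∈ L z) (htrans : ∀ z ∈ s, ∀ y ∈ L z, L y ⊆ L z)
    (hL : ∀ z ∈ s, IsCompact (L z)) : ∃ m ∈ s, ∀ x ∈ L m, m ∈ L x := by
  have : Nonempty s := hs.to_subtype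
  suffices hchain : ∀ c : Set s, IsChain (fun a b : s => b.1 ∈ L a) c → c.Nonempty →
      ∃ lb : s, ∀ a ∈ c, lb.1 ∈ L a by
    obtain ⟨m, hm⟩ := exists_maximal_of_nonempty_chains_bounded hchain
      fun {a b _} hab hbc => htrans a a.2 b hab hbc
    exact ⟨m, m.2, fun x hx => hm ⟨x, hLs m m.2 hx⟩ hx⟩
  rintro c hc ⟨c₀, hc₀⟩
  have : Nonempty c := ⟨⟨c₀, hc₀⟩⟩
  have hdir : Directed (· ⊇ ·) fun i : c => L i.1 := by
    intro i j
    by_cases hij : i = j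
    · exact ⟨i, by simp [hij]⟩
    rcases hc i.2 j.2 (Subtype.coe_injective.ne hij) with h | h
    · exact ⟨j, htrans i i.1.2 j h, le_rfl⟩
    · exact ⟨i, le_rfl, htrans j j.1.2 i h⟩
  obtain ⟨x, hx⟩ := IsCompact.nonempty_iInter_of_directed_nonempty_isCompact_isClosed
    (fun i : c => L i.1) hdir (fun i => ⟨i, hrefl i i.1.2⟩) (fun i => hL i i.1.2)
    fun i => (hL i i.1.2).isClosed
  have hx : ∀ a ∈ c, x ∈ L a := fun a ha => Set.mem_iInter.1 hx ⟨a, ha⟩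
  exact ⟨⟨x, hLs c₀ c₀.2 (hx c₀ hc₀)⟩, hx⟩

lemma norm_inv_norm_smul_self {V : Type*} [NormedAddCommGroup V] [NormedSpace ℝ V] {v : V}
    (hv : v ≠ 0) : ‖‖v‖⁻¹ • v‖ = 1 := by
  rw [norm_smul, norm_inv, norm_norm, inv_mul_cancel₀ (norm_ne_zero_iff.2 hv)]

namespace TukeyDepth

variable {d n : ℕ} (X : Fin n → E d)

lemma sideCount_le_sideCount {u x y : E d} (h : ⟪u, x⟫ ≤ ⟪u, y⟫) :
    sideCount X u x ≤ sideCount X u y :=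
  Set.ncard_le_ncard fun _ hi => le_trans hi h

lemma sideCount_le (u x : E d) : sideCount X u x ≤ n := by
  simpa [sideCount] using Set.ncard_le_card {i : Fin n | ⟪u, X i⟫ ≤ ⟪u, x⟫}

lemma sideCount_smul {u : E d} (x : E d) {t : ℝ} (ht : 0 < t) :
    sideCount X (t • u) x = sideCount X u x := by
  simp only [sideCount, real_inner_smul_left, mul_le_mul_iff_right₀ ht]

lemma sideCount_neg_self {x : E d} (hx : ∀ i, ‖X i‖ < ‖x‖) : sideCount X (-x) x = 0 := by
  rw [sideCount, Set.ncard_eq_zero]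
  refine Set.eq_empty_of_forall_notMem fun i hi => ?_
  have hi : ‖x‖ ^ 2 ≤ ⟪x, X i⟫ := by
    simpa [inner_neg_left, real_inner_self_eq_norm_sq] using hi
  have := real_inner_le_norm x (X i)
  nlinarith [hx i, norm_nonneg (X i)]

lemma eventually_sideCount_le (u x : E d) :
    ∀ᶠ p in 𝓝 (u, x), sideCount X p.1 p.2 ≤ sideCount X u x := by
  have : ∀ᶠ p in 𝓝 (u, x), ∀ i, ⟪u, x⟫ < ⟪u, X i⟫ → ⟪p.1, p.2⟫ < ⟪p.1, X i⟫ := by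
    refine eventually_all.2 fun i => ?_
    by_cases h : ⟪u, x⟫ < ⟪u, X i⟫
    · filter_upwards [(continuous_fst.inner continuous_snd).continuousAt.eventually_lt
        (continuous_fst.inner continuous_const).continuousAt h] with p hp
      exact fun _ => hp
    · exact Eventually.of_forall fun _ h' => absurd h' h
  filter_upwards [this] with p hp
  exact Set.ncard_le_ncard fun i hi => not_lt.1 fun h => (hp i h).not_ge hi

lemma depth_le_sideCount_div {u : E d} (hu : ‖u‖ = 1) (x : E d) :
    depth X x ≤ sideCount X u x / n :=
  csInf_le ⟨0, by rintro _ ⟨v, -, rfl⟩; positivity⟩ ⟨u, hu, rfl⟩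

lemma depth_le_sideCount_div_of_ne_zero {u : E d} (hu : u ≠ 0) (x : E d) :
    depth X x ≤ sideCount X u x / n := by
  have h := depth_le_sideCount_div X (norm_inv_norm_smul_self hu) x
  rwa [sideCount_smul X x (inv_pos.2 (norm_pos_iff.2 hu))] at h

lemma mem_USet_of_sideCount_div_le {u x : E d} (hu : ‖u‖ = 1)
    (h : (sideCount X u x : ℝ) / n ≤ depth X x) : u ∈ USet X x :=
  ⟨hu, le_antisymm h (depth_le_sideCount_div X hu x)⟩

/-- The ratios lie in the finite set `{k / n | k ≤ n}`, so the infimum defining the depth is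
attained. -/
lemma USet_nonempty (hd : 1 ≤ d) (x : E d) : (USet X x).Nonempty := by
  obtain ⟨e, he⟩ : ∃ e : E d, ‖e‖ = 1 := ⟨EuclideanSpace.single ⟨0, hd⟩ 1, by simp⟩
  set ratios := {r : ℝ | ∃ u : E d, ‖u‖ = 1 ∧ r = (sideCount X u x : ℝ) / n}
  have hfin : ratios.Finite :=
    ((Set.finite_Iic n).image fun k : ℕ => (k : ℝ) / n).subset <| by
      rintro _ ⟨v, -, rfl⟩
      exact ⟨_, sideCount_le X v x, rfl⟩
  obtain ⟨u, hu, hdepth⟩ := Set.Nonempty.csInf_mem (s := ratios) ⟨_, e, he, rfl⟩ hfin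
  exact ⟨u, hu, hdepth.symm⟩

lemma finite_range_depth (hd : 1 ≤ d) : (Set.range (depth X)).Finite := by
  refine ((Set.finite_Iic n).image fun k : ℕ => (k : ℝ) / n).subset ?_
  rintro _ ⟨x, rfl⟩
  obtain ⟨u, -, hu⟩ := USet_nonempty X hd x
  exact ⟨_, sideCount_le X u x, hu⟩

lemma depth_le_maxDepth (hd : 1 ≤ d) (x : E d) : depth X x ≤ maxDepth X :=
  le_csSup (finite_range_depth X hd).bddAbove ⟨x, rfl⟩

lemma MSet_nonempty (hd : 1 ≤ d) : (MSet X).Nonempty :=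
  (Set.range_nonempty _).csSup_mem (finite_range_depth X hd)

lemma upperSemicontinuous_depth (hd : 1 ≤ d) : UpperSemicontinuous (depth X) := by
  intro x r hr
  obtain ⟨u, hu, hux⟩ := USet_nonempty X hd x
  filter_upwards [(Continuous.prodMk_right u).tendsto x |>.eventually
    (eventually_sideCount_le X u x)] with y hy
  calc depth X y ≤ sideCount X u y / n := depth_le_sideCount_div X hu y
    _ ≤ sideCount X u x / n := by gcongr
    _ = depth X x := hux
    _ < r := hr

lemma isClosed_MSet (hd : 1 ≤ d) : IsClosed (MSet X) := by
  have : MSet X = depth X ⁻¹' Set.Ici (maxDepth X) :=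
    Set.ext fun x => ⟨fun h => h.ge, (depth_le_maxDepth X hd x).antisymm⟩
  rw [this]
  exact (upperSemicontinuous_depth X hd).isClosed_preimage _

lemma maxDepth_pos (hd : 1 ≤ d) (hn : 0 < n) : 0 < maxDepth X := by
  let i : Fin n := ⟨0, hn⟩
  obtain ⟨u, hu, hdepth⟩ := USet_nonempty X hd (X i)
  have : 0 < sideCount X u (X i) := (Set.ncard_pos (Set.toFinite _)).2 ⟨i, le_refl ⟪u, X i⟫⟩
  calc (0 : ℝ) < sideCount X u (X i) / n := by positivity
    _ = depth X (X i) := hdepth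
    _ ≤ maxDepth X := depth_le_maxDepth X hd _

lemma isCompact_MSet (hd : 1 ≤ d) (hn : 0 < n) : IsCompact (MSet X) := by
  obtain ⟨R, hR⟩ := (Set.finite_range X).isBounded.exists_norm_le
  refine Metric.isCompact_of_isClosed_isBounded (isClosed_MSet X hd)
    ((Metric.isBounded_closedBall (x := 0) (r := R)).subset fun x hx => ?_)
  rw [mem_closedBall_zero_iff]
  by_contra! hRx
  have hfar : ∀ i, ‖X i‖ < ‖x‖ := fun i => (hR _ (Set.mem_range_self i)).trans_lt hRx
  have hx0 : -x ≠ 0 := neg_ne_zero.2 (norm_pos_iff.1 ((norm_nonneg _).trans_lt (hfar ⟨0, hn⟩)))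
  have h := depth_le_sideCount_div_of_ne_zero X hx0 x
  rw [sideCount_neg_self X hfar, Nat.cast_zero, zero_div, hx] at h
  exact (maxDepth_pos X hd hn).not_ge h

lemma eventually_mem_USet {x u : E d} (hx : x ∈ MSet X) (hu : u ∈ USet X x) :
    ∀ᶠ y in 𝓝 x, y ∈ MSet X → u ∈ USet X y := by
  filter_upwards [(Continuous.prodMk_right u).tendsto x |>.eventually
    (eventually_sideCount_le X u x)] with y hy hyM
  refine mem_USet_of_sideCount_div_le X hu.1 ?_
  calc (sideCount X u y : ℝ) / n ≤ sideCount X u x / n := by gcongr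
    _ = depth X y := hu.2.trans (hx.trans hyM.symm)

lemma eventually_inv_norm_smul_mem_USet {x u : E d} (hu : u ∈ USet X x) :
    ∀ᶠ v in 𝓝 u, ‖v‖⁻¹ • v ∈ USet X x := by
  have hu0 : u ≠ 0 := norm_ne_zero_iff.1 (hu.1 ▸ one_ne_zero)
  filter_upwards [eventually_ne_nhds hu0, (Continuous.prodMk_left x).tendsto u |>.eventually
    (eventually_sideCount_le X u x)] with v hv hcount
  refine mem_USet_of_sideCount_div_le X (norm_inv_norm_smul_self hv) ?_
  rw [sideCount_smul X x (inv_pos.2 (norm_pos_iff.2 hv)), ← hu.2]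
  gcongr

lemma mem_HSet_inv_norm_smul {x z v : E d} (hv : 0 < ⟪v, z - x⟫) :
    ‖v‖⁻¹ • v ∈ HSet x z := by
  have hv0 : v ≠ 0 := by rintro rfl; simp at hv
  refine ⟨norm_inv_norm_smul_self hv0, ?_⟩
  rw [← sub_pos, ← inner_sub_right, real_inner_smul_left]
  exact mul_pos (inv_pos.2 (norm_pos_iff.2 hv0)) hv

lemma USet_inter_HSet_nonempty_of_inner_le {x z u : E d} (hxz : x ≠ z) (hu : u ∈ USet X x)
    (h : ⟪u, x⟫ ≤ ⟪u, z⟫) : (USet X x ∩ HSet x z).Nonempty := by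
  have hw : 0 < ‖z - x‖ ^ 2 := pow_pos (norm_pos_iff.2 (sub_ne_zero.2 hxz.symm)) 2
  have htilt : Tendsto (fun t : ℝ => u + t • (z - x)) (𝓝[>] 0) (𝓝 u) := by
    have : Continuous fun t : ℝ => u + t • (z - x) := by fun_prop
    simpa using (this.tendsto 0).mono_left nhdsWithin_le_nhds
  obtain ⟨t, htU, ht⟩ :=
    ((htilt.eventually (eventually_inv_norm_smul_mem_USet X hu)).and self_mem_nhdsWithin).exists
  refine ⟨_, htU, mem_HSet_inv_norm_smul ?_⟩
  rw [inner_add_left, real_inner_smul_left, real_inner_self_eq_norm_sq, inner_sub_right]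
  have : 0 < t * ‖z - x‖ ^ 2 := mul_pos ht hw
  linarith

lemma inner_le_of_USet_inter_HSet_eq_empty {x z u : E d} (h : USet X x ∩ HSet x z = ∅)
    (hu : u ∈ USet X x) : ⟪u, z⟫ ≤ ⟪u, x⟫ :=
  not_lt.1 fun hlt => Set.eq_empty_iff_forall_notMem.1 h u ⟨hu, hu.1, hlt⟩

lemma mem_MSet_and_mem_USet_of_inner_le (hd : 1 ≤ d) {x z u : E d} (hz : z ∈ MSet X)
    (hu : u ∈ USet X x) (h : ⟪u, z⟫ ≤ ⟪u, x⟫) : x ∈ MSet X ∧ u ∈ USet X z := by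
  have hcount : (sideCount X u z : ℝ) / n ≤ sideCount X u x / n := by
    gcongr
    exact sideCount_le_sideCount X h
  have hdz := depth_le_sideCount_div X hu.1 z
  have hdx := depth_le_maxDepth X hd x
  have hz : depth X z = maxDepth X := hz
  have hux : (sideCount X u x : ℝ) / n = depth X x := hu.2
  exact ⟨show depth X x = maxDepth X by linarith, mem_USet_of_sideCount_div_le X hu.1 (by linarith)⟩

lemma self_mem_BSet {z : E d} (hz : z ∈ MSet X) : z ∈ BSet X z :=
  ⟨hz, Set.eq_empty_of_forall_notMem fun _ hu => lt_irrefl _ hu.2.2⟩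

lemma mem_BSet_of_USet_inter_HSet_eq_empty (hd : 1 ≤ d) {x z : E d} (hz : z ∈ MSet X)
    (h : USet X x ∩ HSet x z = ∅) : x ∈ BSet X z :=
  have ⟨_, hu⟩ := USet_nonempty X hd x
  ⟨(mem_MSet_and_mem_USet_of_inner_le X hd hz hu
    (inner_le_of_USet_inter_HSet_eq_empty X h hu)).1, h⟩

lemma mem_BSet_trans (hd : 1 ≤ d) {x y z : E d} (hxy : x ∈ BSet X y) (hyz : y ∈ BSet X z) :
    x ∈ BSet X z := by
  refine ⟨hxy.1, Set.eq_empty_of_forall_notMem fun u ⟨hu, _, hlt⟩ => ?_⟩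
  have hyx := inner_le_of_USet_inter_HSet_eq_empty X hxy.2 hu
  have huy := (mem_MSet_and_mem_USet_of_inner_le X hd hyz.1 hu hyx).2
  exact (inner_le_of_USet_inter_HSet_eq_empty X hyz.2 huy).trans hyx |>.not_gt hlt

lemma eq_of_mem_BSet_of_mem_BSet (hd : 1 ≤ d) {x z : E d} (hxz : x ∈ BSet X z)
    (hzx : z ∈ BSet X x) : x = z := by
  by_contra hne
  obtain ⟨u, hu⟩ := USet_nonempty X hd x
  have huz := (mem_MSet_and_mem_USet_of_inner_le X hd hzx.1 hu
    (inner_le_of_USet_inter_HSet_eq_empty X hxz.2 hu)).2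
  exact (USet_inter_HSet_nonempty_of_inner_le X hne hu
    (inner_le_of_USet_inter_HSet_eq_empty X hzx.2 huz)).ne_empty hxz.2

lemma isClosed_BSet (hd : 1 ≤ d) (z : E d) : IsClosed (BSet X z) := by
  refine isOpen_compl_iff.1 (isOpen_iff_mem_nhds.2 fun x hx => ?_)
  by_cases hxM : x ∈ MSet X
  · obtain ⟨u, huU, huH⟩ := Set.nonempty_iff_ne_empty.2 fun h => hx ⟨hxM, h⟩
    filter_upwards [eventually_mem_USet X hxM huU,
      ContinuousAt.eventually_lt (by fun_prop) continuousAt_const huH.2] with y hyU hyH hyB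
    exact Set.eq_empty_iff_forall_notMem.1 hyB.2 u ⟨hyU hyB.1, huU.1, hyH⟩
  · exact mem_of_superset ((isClosed_MSet X hd).isOpen_compl.mem_nhds hxM) fun _ hy hyB =>
      hy hyB.1

lemma exists_mem_MSet_forall_mem_BSet_eq (hd : 1 ≤ d) (hn : 0 < n) :
    ∃ z ∈ MSet X, ∀ x ∈ BSet X z, x = z := by
  obtain ⟨m, hm, hmin⟩ := exists_minimal_of_isCompact_lowerSet (MSet_nonempty X hd) (BSet X)
    (fun _ _ _ hx => hx.1) (fun _ => self_mem_BSet X)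
    (fun _ _ _ hy _ hx => mem_BSet_trans X hd hx hy)
    fun _ _ => (isCompact_MSet X hd hn).of_isClosed_subset (isClosed_BSet X hd _) fun _ hx => hx.1
  exact ⟨m, hm, fun x hx => eq_of_mem_BSet_of_mem_BSet X hd hx (hmin x hx)⟩

end TukeyDepth

open TukeyDepth in
theorem lemma3_general {d n : ℕ} (hd : 1 ≤ d) (X : Fin n → E d) :
    ∃ x₀ ∈ MSet X, ∀ x : E d, x ≠ x₀ → (USet X x ∩ HSet x x₀).Nonempty := by
  rcases n.eq_zero_or_pos with rfl | hn
  · -- with no sample points every ratio is `0 / 0 = 0`: all points are deepest and all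
    -- directions optimal
    obtain ⟨z, hz⟩ := MSet_nonempty X hd
    refine ⟨z, hz, fun x hxz => ⟨_, ?_, mem_HSet_inv_norm_smul (v := z - x) ?_⟩⟩
    · obtain ⟨_, _, hu⟩ := USet_nonempty X hd x
      exact mem_USet_of_sideCount_div_le X (norm_inv_norm_smul_self (sub_ne_zero.2 hxz.symm))
        (by simp [← hu])
    · rw [real_inner_self_eq_norm_sq]
      exact pow_pos (norm_pos_iff.2 (sub_ne_zero.2 hxz.symm)) 2
  · obtain ⟨z, hzM, hz⟩ := exists_mem_MSet_forall_mem_BSet_eq X hd hn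
    exact ⟨z, hzM, fun x hxz => Set.nonempty_iff_ne_empty.2 fun h =>
      hxz (hz x (mem_BSet_of_USet_inter_HSet_eq_empty X hd hzM h))⟩

/-- **Lemma 3.** If `X` is in general position in `ℝ^d` (`d ≥ 1`), there is a
deepest point `x₀ ∈ M(X)` such that every `x ≠ x₀` has an optimal direction `u ∈ U_x` with
`⟪u, x⟫ < ⟪u, x₀⟫`, i.e. `U_x ∩ H_{x,x₀} ≠ ∅`. -/
theorem lemma3 {d n : ℕ} (hd : 1 ≤ d) (X : Fin n → E d)
    (hX : inGeneralPosition X) :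
    ∃ x₀ ∈ MSet X, ∀ x : E d, x ≠ x₀ → (USet X x ∩ HSet x x₀).Nonempty :=
  lemma3_general hd X
end
end

section
/- (Lemma 6) Let X^n ⊂ ℝ^d (d ≥ 2), let u_ℓ ∈ S^{d−1}, let x ∈ M(X_{u_ℓ}^n) be a maximum-depth point of the projected sample, and let ℓ = {A_{u_ℓ} x + δ u_ℓ : δ ∈ ℝ}. Let y ∈ ℓ \ cov(X^n), let Y^m consist of m repetitions of y, and let z be the intersection point of ℓ with the boundary of cov(X^n) closer to y (so the open segment between z and y is disjoint from cov(X^n)). Then D(z, X^n ∪ Y^m) ≥ min{n·λ*(X_{u_ℓ}^n), m + 1} / (n + m). -/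
open scoped RealInnerProductSpace
open MeasureTheory

noncomputable section

/-!
Fix a unit direction `u`. If `⟪u, y⟫ ≤ ⟪u, z⟫`, the closed halfspace at `z` contains the `m`
copies of `y` and, since `z ∈ cov(Xⁿ)`, at least one sample point. Otherwise let `T` be the
sample points strictly beyond `z` in direction `u`. A point of `cov(T)` on `ℓ` would lie on the
ray from `z` through `y`, hence either in the open segment `(z, y)` or beyond `y`, which puts
`y` in `cov(Xⁿ)`. So `x` lies outside the hull of the projections of `T`, and a direction `w`
separating them shows that the halfspace at `z` in direction `u` contains at least as many
sample points as the halfspace at `x` in direction `w`, i.e. at least `n·λ*(X_{u_ℓ}ⁿ)`.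
-/

open AffineMap

theorem Convex.lineMap_notMem_of_openSegment_inter_eq_empty {V : Type*} [AddCommGroup V]
    [Module ℝ V] {K : Set V} (hK : Convex ℝ K) {z y : V} (hz : z ∈ K) (hy : y ∉ K)
    (hseg : openSegment ℝ z y ∩ K = ∅) {t : ℝ} (ht : 0 < t) : lineMap z y t ∉ K := by
  intro hp
  rcases lt_or_ge t 1 with ht1 | ht1
  · exact hseg.subset ⟨lineMap_mem_openSegment ℝ z y ⟨ht, ht1⟩, hp⟩
  · apply hy
    have hyt : lineMap z (lineMap z y t) t⁻¹ = y := by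
      rw [lineMap_lineMap_right, inv_mul_cancel₀ ht.ne', lineMap_apply_one]
    rw [← hyt]
    exact hK.segment_subset hz hp
      (lineMap_mem_segment ℝ _ _ ⟨by positivity, inv_le_one_of_one_le₀ ht1⟩)

theorem exists_norm_eq_one_inner_lt_of_notMem_convexHull {F : Type*} [NormedAddCommGroup F]
    [InnerProductSpace ℝ F] [CompleteSpace F] [Nontrivial F] {s : Set F} (hs : s.Finite) {x : F}
    (hx : x ∉ convexHull ℝ s) : ∃ w : F, ‖w‖ = 1 ∧ ∀ p ∈ s, ⟪w, x⟫ < ⟪w, p⟫ := by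
  obtain ⟨f, r, hfx, hfs⟩ :=
    geometric_hahn_banach_point_closed (convex_convexHull ℝ s) (hs.isClosed_convexHull ℝ) hx
  set v := (InnerProductSpace.toDual ℝ F).symm f
  have hv : ∀ p, ⟪v, p⟫ = f p := fun p => InnerProductSpace.toDual_symm_apply
  have hsep : ∀ p ∈ s, ⟪v, x⟫ < ⟪v, p⟫ := fun p hp => by
    rw [hv, hv]; linarith [hfs p (subset_convexHull ℝ s hp)]
  by_cases hv0 : v = 0
  · obtain ⟨w, hw⟩ := exists_norm_eq F zero_le_one
    refine ⟨w, hw, fun p hp => absurd (hsep p hp) ?_⟩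
    simp [hv0]
  · refine ⟨‖v‖⁻¹ • v, norm_smul_inv_norm hv0, fun p hp => ?_⟩
    simp only [real_inner_smul_left]
    exact mul_lt_mul_of_pos_left (hsep p hp) (by positivity)

theorem convexHull_subset_setOf_lt_inner {d : ℕ} {s : Set (E d)} {u : E d} {a : ℝ}
    (hs : ∀ p ∈ s, a < ⟪u, p⟫) : convexHull ℝ s ⊆ {p | a < ⟪u, p⟫} :=
  convexHull_min hs (convex_halfSpace_gt (innerₛₗ ℝ u).isLinear a)

section SideCount

variable {d : ℕ}

theorem sideCount_append {k l : ℕ} (X : Fin k → E d) (Y : Fin l → E d) (u x : E d) :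
    sideCount (Fin.append X Y) u x = sideCount X u x + sideCount Y u x := by
  classical
  simp only [sideCount, ← Finset.coe_filter_univ, Set.ncard_coe_finset, Finset.card_filter,
    Fin.sum_univ_add, Fin.append_left, Fin.append_right]

theorem sideCount_const {m : ℕ} {u x y : E d} (h : ⟪u, y⟫ ≤ ⟪u, x⟫) :
    sideCount (fun _ : Fin m => y) u x = m := by
  simp [sideCount, h]

theorem sideCount_pos_of_mem_convexHull {n : ℕ} {X : Fin n → E d} {x : E d}
    (hx : x ∈ convexHull ℝ (Set.range X)) (u : E d) : 0 < sideCount X u x := by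
  rw [sideCount, Set.ncard_pos (Set.toFinite _)]
  by_contra h
  simp only [Set.not_nonempty_iff_eq_empty, Set.eq_empty_iff_forall_notMem, Set.mem_ofPred_eq,
    not_le] at h
  have hxx : ⟪u, x⟫ < ⟪u, x⟫ :=
    convexHull_subset_setOf_lt_inner (by rintro _ ⟨i, rfl⟩; exact h i) hx
  exact hxx.false

theorem mul_depth_le_sideCount {n : ℕ} (X : Fin n → E d) (x : E d) {w : E d} (hw : ‖w‖ = 1) :
    n * depth X x ≤ sideCount X w x := by
  rcases n.eq_zero_or_pos with rfl | hn
  · simp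
  have hle : depth X x ≤ sideCount X w x / n :=
    csInf_le ⟨0, by rintro _ ⟨_, _, rfl⟩; positivity⟩ ⟨w, hw, rfl⟩
  exact (le_div_iff₀' (by positivity)).mp hle

theorem div_le_depth [NeZero d] {n : ℕ} (X : Fin n → E d) (x : E d) {c : ℝ}
    (hc : ∀ u : E d, ‖u‖ = 1 → c ≤ sideCount X u x) : c / n ≤ depth X x := by
  obtain ⟨u₀, hu₀⟩ := exists_norm_eq (E d) zero_le_one
  refine le_csInf ⟨_, u₀, hu₀, rfl⟩ ?_
  rintro _ ⟨u, hu, rfl⟩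
  exact div_le_div_of_nonneg_right (hc u hu) n.cast_nonneg

end SideCount

section Projection

variable {d : ℕ} {uℓ : E d} {A : Fin (d - 1) → E d}

theorem proj_apply (p : E d) (j : Fin (d - 1)) : proj A p j = ⟪A j, p⟫ := rfl

theorem isLinearMap_proj : IsLinearMap ℝ (proj A) :=
  ⟨fun p q => by ext j; exact inner_add_right _ _ _,
    fun r p => by ext j; exact real_inner_smul_right _ _ _⟩

theorem eq_embed_proj_add_inner_smul (hd : 1 ≤ d) (hA : IsAu uℓ A) (p : E d) :
    p = embed A (proj A p) + ⟪uℓ, p⟫ • uℓ := by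
  have hON : Orthonormal ℝ (Sum.elim A fun _ : Unit => uℓ) := by
    rw [orthonormal_iff_ite]
    rintro (j | _) (j' | _)
    · simpa using orthonormal_iff_ite.mp hA.2.1 j j'
    · simpa using hA.2.2 j
    · simpa [real_inner_comm] using hA.2.2 j'
    · simp [hA.1]
  have hcard : Fintype.card (Fin (d - 1) ⊕ Unit) = Module.finrank ℝ (E d) := by
    simp only [Fintype.card_sum, Fintype.card_fin, Fintype.card_unique, finrank_euclideanSpace]
    omega
  let b := (basisOfOrthonormalOfCardEqFinrank hON hcard).toOrthonormalBasis (by simpa)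
  have hb : ⇑b = Sum.elim A fun _ : Unit => uℓ := by simp [b]
  have h := b.sum_repr' p
  simp only [hb, Fintype.sum_sum_type, Sum.elim_inl, Sum.elim_inr, Fintype.sum_unique] at h
  rw [embed]
  simpa [proj_apply] using h.symm

variable {x : E (d - 1)} {y z : E d} {δy δz : ℝ}

theorem notMem_proj_image_of_inner_lt (hd : 1 ≤ d) (hA : IsAu uℓ A) {K : Set (E d)}
    (hK : Convex ℝ K) (hyℓ : y = embed A x + δy • uℓ) (hzℓ : z = embed A x + δz • uℓ)
    (hz : z ∈ K) (hy : y ∉ K) (hseg : openSegment ℝ z y ∩ K = ∅) {u : E d}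
    (hzy : ⟪u, z⟫ < ⟪u, y⟫) {C : Set (E d)} (hCK : C ⊆ K) (hCu : ∀ p ∈ C, ⟪u, z⟫ < ⟪u, p⟫) :
    x ∉ proj A '' C := by
  rintro ⟨p, hpC, hpx⟩
  have hp : p = embed A x + ⟪uℓ, p⟫ • uℓ := hpx ▸ eq_embed_proj_add_inner_smul hd hA p
  have hδ : δy - δz ≠ 0 := by
    intro h
    apply hy
    rwa [hyℓ, show δy = δz by linarith, ← hzℓ]
  set t := (⟪uℓ, p⟫ - δz) / (δy - δz)
  have hpt : p = lineMap z y t := by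
    have ht : t * (δy - δz) = ⟪uℓ, p⟫ - δz := div_mul_cancel₀ _ hδ
    rw [lineMap_apply_module, hzℓ, hyℓ]
    conv_lhs => rw [hp]
    linear_combination (norm := module) -ht • uℓ
  have hinner : ⟪u, p⟫ - ⟪u, z⟫ = t * (⟪u, y⟫ - ⟪u, z⟫) := by
    rw [hpt, lineMap_apply_module, inner_add_right, real_inner_smul_right, real_inner_smul_right]
    ring
  have ht : 0 < t := by nlinarith [hCu p hpC]
  exact hK.lineMap_notMem_of_openSegment_inter_eq_empty hz hy hseg ht (hpt ▸ hCK hpC)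

end Projection

theorem mul_maxDepth_proj_le_sideCount {d n : ℕ} (hd : 2 ≤ d) (X : Fin n → E d) {uℓ : E d}
    {A : Fin (d - 1) → E d} (hA : IsAu uℓ A) {x : E (d - 1)}
    (hx : x ∈ MSet (fun i => proj A (X i))) {y z : E d} {δy δz : ℝ}
    (hyℓ : y = embed A x + δy • uℓ) (hzℓ : z = embed A x + δz • uℓ)
    (hz : z ∈ convexHull ℝ (Set.range X)) (hy : y ∉ convexHull ℝ (Set.range X))
    (hseg : openSegment ℝ z y ∩ convexHull ℝ (Set.range X) = ∅) {u : E d}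
    (hzy : ⟪u, z⟫ < ⟪u, y⟫) :
    n * maxDepth (fun i => proj A (X i)) ≤ sideCount X u z := by
  have : NeZero (d - 1) := ⟨by omega⟩
  set T := {i | ⟪u, z⟫ < ⟪u, X i⟫}
  have hxT : x ∉ convexHull ℝ ((fun i => proj A (X i)) '' T) := by
    rw [← Set.image_image (proj A) X T, ← isLinearMap_proj.image_convexHull]
    exact notMem_proj_image_of_inner_lt (by omega) hA (convex_convexHull ℝ _) hyℓ hzℓ hz hy hseg
      hzy (convexHull_mono (Set.image_subset_range X T))
      (convexHull_subset_setOf_lt_inner (by rintro _ ⟨i, hi, rfl⟩; exact hi))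
  obtain ⟨w, hw, hsep⟩ :=
    exists_norm_eq_one_inner_lt_of_notMem_convexHull (T.toFinite.image _) hxT
  have hdx : depth (fun i => proj A (X i)) x = maxDepth (fun i => proj A (X i)) := hx
  calc (n : ℝ) * maxDepth (fun i => proj A (X i)) = n * depth (fun i => proj A (X i)) x := by
        rw [hdx]
    _ ≤ sideCount (fun i => proj A (X i)) w x := mul_depth_le_sideCount _ _ hw
    _ ≤ sideCount X u z := Nat.cast_le.mpr <| Set.ncard_le_ncard fun i hi =>
        show ⟪u, X i⟫ ≤ ⟪u, z⟫ from not_lt.mp fun hiT => (hsep _ ⟨i, hiT, rfl⟩).not_ge hi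

/-- **Lemma 6.** Let `u_ℓ` be a unit direction with matrix `A`, let `x` be a
maximum-depth point of the projected sample, and let `ℓ` be the line `{A x + δ u_ℓ : δ ∈ ℝ}`.
If `y ∈ ℓ` lies outside `cov(Xⁿ)`, `Yᵐ` consists of `m` repetitions of `y`, and `z ∈ ℓ` is
the intersection of `ℓ` with the boundary of `cov(Xⁿ)` closer to `y` (the open segment from
`z` to `y` misses `cov(Xⁿ)`), then
`D(z, Xⁿ ∪ Yᵐ) ≥ min{n·λ*(X_{u_ℓ}ⁿ), m + 1} / (n + m)`. -/
theorem lemma6 {d n m : ℕ} (hd : 2 ≤ d) (X : Fin n → E d)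
    (uℓ : E d) (A : Fin (d - 1) → E d) (hA : IsAu uℓ A)
    (x : E (d - 1)) (hx : x ∈ MSet (fun i => proj A (X i)))
    (y : E d) (δy : ℝ) (hyℓ : y = embed A x + δy • uℓ)
    (hyout : y ∉ convexHull ℝ (Set.range X))
    (z : E d) (δz : ℝ) (hzℓ : z = embed A x + δz • uℓ)
    (hzb : z ∈ frontier (convexHull ℝ (Set.range X)))
    (hseg : openSegment ℝ z y ∩ convexHull ℝ (Set.range X) = ∅) :
    min ((n : ℝ) * maxDepth (fun i => proj A (X i))) ((m : ℝ) + 1) / ((n : ℝ) + (m : ℝ))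
      ≤ depth (Fin.append X (fun _ : Fin m => y)) z := by
  have : NeZero d := ⟨by omega⟩
  have hz : z ∈ convexHull ℝ (Set.range X) :=
    ((Set.finite_range X).isClosed_convexHull ℝ).frontier_subset hzb
  refine (div_le_depth _ _ fun u _ => ?_).trans_eq' (by push_cast; rfl)
  rw [sideCount_append, Nat.cast_add]
  rcases le_or_gt ⟪u, y⟫ ⟪u, z⟫ with hyz | hzy
  · have hX : (1 : ℝ) ≤ sideCount X u z := by
      exact_mod_cast sideCount_pos_of_mem_convexHull hz u
    rw [sideCount_const hyz]
    exact min_le_of_right_le (by linarith)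
  · refine min_le_of_left_le ?_
    have := mul_maxDepth_proj_le_sideCount hd X hA hx hyℓ hzℓ hz hyout hseg hzy
    linarith [(sideCount (fun _ : Fin m => y) u z).cast_nonneg (α := ℝ)]
end
end
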